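/- arXiv:2301.09150 — 2 statements merged into one kernel-verified Lean document; each statement's English description precedes it below -/
import Mathlib

section
/- Let S = k[x_0, ..., x_n] be a Z-graded polynomial ring with deg(x_i) = d_i positive integers, and let M be a finitely generated graded S-module with M_0 ≠ 0 and M_i = 0 for all i < 0. If the graded Betti number β_{i,j}(M) = dim_k Tor_i^S(M,k)_j is nonzero, then j ≥ w_i, where w_i is the sum of the i smallest degrees among d_0, ..., d_n. -/
/-!
Let `F` be the minimal resolution and `K` the Koszul complex of `x_0, …, x_n`. In the double
complex `F ⊗ K`, by induction on `p`, every homogeneous element of `F_p ⊗ K_q` of degree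
`e < w_{p+q}` whose Koszul boundary lies in the image of `D` has the form `∂α + Dβ`. For `p = 0`
its components lie in `F_0 ⊗ K_T` with `|T| = q`, and the augmentation sends them to
`M_{e - deg T} = 0`, because `w_q` is the least weight of a `q`-subset of the variables, so they
lift to `F_1`. For `p + 1`, applying `D` gives a Koszul cycle without constant term (minimality),
which the explicit contracting homotopy of `K` writes as `∂η` with `η ∈ F_p ⊗ K_{q+1}`; the
induction hypothesis for `η` lets us subtract a Koszul boundary from the element and land in
`ker D = im D`.

If `F_i` had a generator `b` of degree `j < w_i`, then `e_b ⊗ 1` would be of the form `∂α + Dβ`,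
which is absurd: the `e_b ⊗ 1` coefficient of `∂α + Dβ` has no constant term.
-/

open MvPolynomial

/-- A minimal graded free resolution of a graded module `M` over the weighted
polynomial ring `S = k[x_0, ..., x_n]` with `deg x_t = d t`.  The `i`-th free module
`F_i` has basis `B i`, with the basis element `b` a generator of degree `deg i b`
(so `F_i = ⊕_b S(-deg i b)`).  The graded Betti number `β_{i,j}(M)` is the number of
`b : B i` with `deg i b = j`. -/
structure GradedFreeRes (k : Type) [Field k] (n : ℕ) (d : Fin (n + 1) → ℕ)
    (M : Type) [AddCommGroup M] [Module (MvPolynomial (Fin (n + 1)) k) M]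
    [Module k M] (𝒜 : ℤ → Submodule k M) where
  B : ℕ → Type
  deg : ∀ i, B i → ℤ
  D : ∀ i, (B (i + 1) →₀ MvPolynomial (Fin (n + 1)) k) →ₗ[MvPolynomial (Fin (n + 1)) k]
      (B i →₀ MvPolynomial (Fin (n + 1)) k)
  aug : (B 0 →₀ MvPolynomial (Fin (n + 1)) k) →ₗ[MvPolynomial (Fin (n + 1)) k] M
  aug_surj : Function.Surjective aug
  /-- the augmentation is degree-preserving -/
  aug_hom : ∀ b : B 0, aug (Finsupp.single b 1) ∈ 𝒜 (deg 0 b)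
  exact_zero : Function.Exact (D 0) aug
  exact_succ : ∀ i, Function.Exact (D (i + 1)) (D i)
  /-- minimality: all matrix entries of the differentials lie in the maximal ideal -/
  minimal : ∀ (i) (b : B (i + 1)) (b' : B i), constantCoeff (D i (Finsupp.single b 1) b') = 0
  /-- the differentials are homogeneous for the weighted grading -/
  homog : ∀ (i) (b : B (i + 1)) (b' : B i),
    D i (Finsupp.single b 1) b' ∈
      weightedHomogeneousSubmodule k (fun t => (d t : ℤ)) (deg (i + 1) b - deg i b')

open Finset

section Koszul

variable {R : Type*} [CommRing R] {ι : Type*} [LinearOrder ι]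
  {N N' : Type*} [AddCommGroup N] [Module R N] [AddCommGroup N'] [Module R N']

def koszulSign (t : ι) (T : Finset ι) : ℤ := (-1) ^ #{s ∈ T | s < t}

lemma koszulSign_insert_of_lt {t s : ι} {T : Finset ι} (hst : s < t) (hs : s ∉ T) :
    koszulSign t (insert s T) = -koszulSign t T := by
  rw [koszulSign, koszulSign, filter_insert, if_pos hst,
    card_insert_of_notMem fun h => hs (mem_filter.mp h).1, pow_succ, mul_neg_one]

lemma koszulSign_insert_of_gt {t s : ι} {T : Finset ι} (hts : t < s) :
    koszulSign t (insert s T) = koszulSign t T := by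
  rw [koszulSign, koszulSign, filter_insert, if_neg (not_lt.mpr hts.le)]

lemma koszulSign_of_forall_le {t : ι} {T : Finset ι} (h : ∀ s ∈ T, t ≤ s) :
    koszulSign t T = 1 := by
  rw [koszulSign, filter_false_of_mem fun s hs => not_lt.mpr (h s hs), card_empty, pow_zero]

lemma koszulSign_mul_koszulSign_insert {t t' : ι} {T : Finset ι} (hne : t ≠ t')
    (ht : t ∉ T) (ht' : t' ∉ T) :
    koszulSign t T * koszulSign t' (insert t T)
      = -(koszulSign t' T * koszulSign t (insert t' T)) := by
  rcases hne.lt_or_gt with h | h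
  · rw [koszulSign_insert_of_lt h ht, koszulSign_insert_of_gt h]; ring
  · rw [koszulSign_insert_of_gt h, koszulSign_insert_of_lt h ht']; ring

variable [Fintype ι]

variable (N) in
/-- The Koszul complex of `x` with coefficients in `N`: `ω T` is the coefficient of
`e_T = ⋀_{t ∈ T} e_t`, and the differential sends `e_{insert t T}` to `± x t • e_T`. -/
def koszulDiff (x : ι → R) : (Finset ι → N) →ₗ[R] (Finset ι → N) where
  toFun ω T := ∑ t ∈ Tᶜ, koszulSign t T • x t • ω (insert t T)
  map_add' ω ω' := by
    funext T
    simp only [Pi.add_apply, smul_add, sum_add_distrib]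
  map_smul' c ω := by
    funext T
    simp only [Pi.smul_apply, smul_sum, RingHom.id_apply, smul_comm c]

lemma koszulDiff_apply (x : ι → R) (ω : Finset ι → N) (T : Finset ι) :
    koszulDiff N x ω T = ∑ t ∈ Tᶜ, koszulSign t T • x t • ω (insert t T) := rfl

lemma koszulDiff_koszulDiff (x : ι → R) (ω : Finset ι → N) :
    koszulDiff N x (koszulDiff N x ω) = 0 := by
  funext T
  have hexpand : ∀ t ∈ Tᶜ, koszulSign t T • x t • koszulDiff N x ω (insert t T)
      = ∑ t' ∈ Tᶜ, if t' ≠ t then (koszulSign t T * koszulSign t' (insert t T)) •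
          (x t * x t') • ω (insert t' (insert t T)) else 0 := by
    intro t _
    rw [koszulDiff_apply, smul_sum, smul_sum, compl_insert, ← filter_ne', sum_filter]
    refine sum_congr rfl fun t' _ => ?_
    split_ifs
    · rw [mul_smul, mul_smul, smul_comm (x t) (koszulSign t' _)]
    · rfl
  rw [koszulDiff_apply, sum_congr rfl hexpand, ← sum_product', Pi.zero_apply]
  refine sum_involution (fun p _ => p.swap) (fun p hp => ?_) (fun p _ hp hswap => ?_)
    (fun p hp => mem_product.mpr ⟨(mem_product.mp hp).2, (mem_product.mp hp).1⟩)
    (fun _ _ => rfl)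
  · obtain ⟨h1, h2⟩ := mem_product.mp hp
    by_cases hd : p.2 = p.1
    · simp [hd]
    · rw [if_pos hd, Prod.fst_swap, Prod.snd_swap, if_pos (Ne.symm hd),
        koszulSign_mul_koszulSign_insert (Ne.symm hd) (mem_compl.mp h1) (mem_compl.mp h2),
        insert_comm, mul_comm (x p.1), neg_smul, neg_add_cancel]
  · exact hp (if_neg fun h => h (Prod.ext_iff.mp hswap).1)

lemma koszulDiff_comp (x : ι → R) (f : N →ₗ[R] N') (ω : Finset ι → N) :
    koszulDiff N' x (f ∘ ω) = f ∘ koszulDiff N x ω := by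
  funext T
  simp only [koszulDiff_apply, Function.comp_apply, map_sum, map_zsmul, map_smul]

lemma koszulDiff_single (x : ι → R) (T₀ : Finset ι) (m : N) :
    koszulDiff N x (Pi.single T₀ m)
      = ∑ t ∈ T₀, Pi.single (T₀.erase t) (koszulSign t (T₀.erase t) • x t • m) := by
  funext T
  simp only [koszulDiff_apply, Finset.sum_apply, Pi.single_apply, smul_ite, smul_zero]
  rw [← sum_filter, ← sum_filter]
  refine sum_congr ?_ fun t ht => ?_
  · ext t
    simp only [mem_filter, mem_compl]
    constructor
    · rintro ⟨ht, rfl⟩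
      exact ⟨mem_insert_self t T, (erase_insert ht).symm⟩
    · rintro ⟨ht, rfl⟩
      exact ⟨notMem_erase t T₀, insert_erase ht⟩
  · rw [(mem_filter.mp ht).2]

end Koszul

lemma MvPolynomial.X_smul_monomial {R : Type*} [CommRing R] {ι : Type*} (t : ι) (ν : ι →₀ ℕ)
    (c : R) :
    (X t : MvPolynomial ι R) • monomial ν c = monomial (ν + Finsupp.single t 1) c := by
  rw [smul_eq_mul, monomial_add_single, pow_one, mul_comm]

lemma Finsupp.isLeast_support_iff {ι : Type*} [LinearOrder ι] {ν : ι →₀ ℕ} {u : ι} :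
    IsLeast (ν.support : Set ι) u ↔ ν u ≠ 0 ∧ ∀ t < u, ν t = 0 := by
  simp only [IsLeast, lowerBounds, mem_coe, Finsupp.mem_support_iff]
  refine and_congr_right fun _ => ⟨fun h t htu => ?_, fun h t ht => ?_⟩
  · by_contra hν
    exact (h hν).not_gt htu
  · by_contra htu
    exact ht (h t (not_le.mp htu))

lemma Finsupp.isLeast_support_add_single {ι : Type*} [LinearOrder ι] {ν : ι →₀ ℕ} {u t : ι}
    (hν : IsLeast (ν.support : Set ι) u) (hut : u ≤ t) :
    IsLeast ((ν + Finsupp.single t 1).support : Set ι) u := by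
  rw [Finsupp.isLeast_support_iff] at hν ⊢
  refine ⟨by simp [hν.1], fun s hs => ?_⟩
  simp [hν.2 s hs, (hs.trans_le hut).ne']

section Contraction

variable {R : Type*} [CommRing R] {ι : Type*} [LinearOrder ι]

open Classical in
/-- Divides by `X u` the monomials whose least variable is `u`, and kills the others. -/
noncomputable def divLeastVar (u : ι) : MvPolynomial ι R →+ MvPolynomial ι R :=
  (Finsupp.liftAddHom fun ν =>
    if IsLeast (ν.support : Set ι) u then (monomial (ν - Finsupp.single u 1)).toAddMonoidHom
    else 0).comp AddMonoidAlgebra.coeffAddEquiv.toAddMonoidHom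

open Classical in
lemma divLeastVar_monomial (u : ι) (ν : ι →₀ ℕ) (c : R) :
    divLeastVar u (monomial ν c) =
      if IsLeast (ν.support : Set ι) u then monomial (ν - Finsupp.single u 1) c else 0 := by
  rw [← single_eq_monomial]
  simp [divLeastVar, apply_ite (fun f : R →+ MvPolynomial ι R => f c)]

lemma divLeastVar_mem_weightedHomogeneousSubmodule {w : ι → ℤ} {δ : ℤ} {p : MvPolynomial ι R}
    (hp : p ∈ weightedHomogeneousSubmodule R w δ) (u : ι) :
    divLeastVar u p ∈ weightedHomogeneousSubmodule R w (δ - w u) := by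
  rw [p.as_sum, map_sum]
  refine Submodule.sum_mem _ fun ν hν => ?_
  rw [divLeastVar_monomial]
  split_ifs with hu
  · have hweight := congrArg (Finsupp.weight w) (tsub_add_cancel_of_le (Finsupp.single_le_iff.mpr
      (Nat.one_le_iff_ne_zero.mpr (Finsupp.isLeast_support_iff.mp hu).1)))
    rw [map_add, Finsupp.weight_single, one_smul,
      (mem_weightedHomogeneousSubmodule _ _ _ _).mp hp (mem_support_iff.mp hν)] at hweight
    exact isWeightedHomogeneous_monomial _ _ _ (by linarith)
  · exact zero_mem _

variable {N : Type*} [AddCommGroup N]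

/-- With `δ = divLeastVar` this is the contracting homotopy of the Koszul complex of the
variables: it trades the least variable `x_u` of a monomial `x^ν e_T` with `u < min T` for the
exterior factor `e_u`. -/
def koszulHomotopy (δ : ι → N →+ N) : (Finset ι → N) →+ (Finset ι → N) where
  toFun ω T := if h : T.Nonempty then δ (T.min' h) (ω (T.erase (T.min' h))) else 0
  map_zero' := by
    funext T
    split <;> simp
  map_add' ω ω' := by
    funext T
    by_cases h : T.Nonempty <;> simp [h]

lemma koszulHomotopy_comp {N' : Type*} [AddCommGroup N'] {δ : ι → N →+ N} {δ' : ι → N' →+ N'}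
    (f : N →+ N') (hf : ∀ u m, f (δ u m) = δ' u (f m)) (ω : Finset ι → N) :
    koszulHomotopy δ' (f ∘ ω) = f ∘ koszulHomotopy δ ω := by
  funext T
  simp only [koszulHomotopy, AddMonoidHom.coe_mk, ZeroHom.coe_mk, Function.comp_apply]
  split_ifs
  · exact (hf _ _).symm
  · exact f.map_zero.symm

lemma koszulHomotopy_apply_eq_zero_of_card_ne (δ : ι → N →+ N) {ω : Finset ι → N} {q : ℕ}
    (hω : ∀ T, #T ≠ q → ω T = 0) {T : Finset ι} (hT : #T ≠ q + 1) :
    koszulHomotopy δ ω T = 0 := by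
  simp only [koszulHomotopy, AddMonoidHom.coe_mk, ZeroHom.coe_mk]
  split_ifs with hne
  · rw [hω, map_zero]
    rw [card_erase_of_mem (min'_mem T hne)]
    have := hne.card_pos
    omega
  · rfl

lemma koszulHomotopy_single_apply_insert (δ : ι → N →+ N) {A : Finset ι} {v : ι}
    (hv : ∀ a ∈ A, v < a) (m : N) :
    koszulHomotopy δ (Pi.single A m) (insert v A) = δ v m := by
  have hmin : (insert v A).min' (insert_nonempty v A) = v :=
    le_antisymm (min'_le _ _ (mem_insert_self v A))
      (le_min' _ _ _ fun a ha => (mem_insert.mp ha).elim ge_of_eq fun ha => (hv a ha).le)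
  simp only [koszulHomotopy, AddMonoidHom.coe_mk, ZeroHom.coe_mk, dif_pos (insert_nonempty v A),
    hmin, erase_insert fun h => (hv v h).false, Pi.single_eq_same]

lemma koszulHomotopy_single_apply_of_ne_insert (δ : ι → N →+ N) {A T : Finset ι}
    (hT : ∀ v, (∀ a ∈ A, v < a) → T ≠ insert v A) (m : N) :
    koszulHomotopy δ (Pi.single A m) T = 0 := by
  simp only [koszulHomotopy, AddMonoidHom.coe_mk, ZeroHom.coe_mk]
  split_ifs with hne
  · rw [Pi.single_apply, if_neg, map_zero]
    rintro rfl
    refine hT _ (fun a ha => lt_of_le_of_ne (min'_le _ _ (mem_of_mem_erase ha)) ?_)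
      (insert_erase (min'_mem T hne)).symm
    exact fun h => notMem_erase a T (h ▸ ha)
  · rfl

lemma koszulHomotopy_single_zsmul (δ : ι → N →+ N)
    (A : Finset ι) (z : ℤ) (p : N) :
    koszulHomotopy δ (Pi.single A (z • p)) = z • koszulHomotopy δ (Pi.single A p) := by
  rw [Pi.single_smul', map_zsmul]

lemma koszulHomotopy_single_monomial_of_isLeast {A : Finset ι} {ν : ι →₀ ℕ} {v : ι}
    (hν : IsLeast (ν.support : Set ι) v) (hv : ∀ a ∈ A, v < a) (c : R) :
    koszulHomotopy divLeastVar (Pi.single A (monomial ν c))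
      = Pi.single (insert v A) (monomial (ν - Finsupp.single v 1) c) := by
  funext T
  by_cases hT : T = insert v A
  · rw [hT, koszulHomotopy_single_apply_insert _ hv, divLeastVar_monomial, if_pos hν,
      Pi.single_eq_same]
  rw [Pi.single_eq_of_ne hT]
  by_cases hex : ∃ w, (∀ a ∈ A, w < a) ∧ T = insert w A
  · obtain ⟨w, hw, rfl⟩ := hex
    rw [koszulHomotopy_single_apply_insert _ hw, divLeastVar_monomial, if_neg]
    exact fun hw' => hT (by rw [hw'.unique hν])
  · simp only [not_exists, not_and] at hex
    exact koszulHomotopy_single_apply_of_ne_insert _ hex _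

lemma koszulHomotopy_single_monomial_eq_zero {A : Finset ι} {ν : ι →₀ ℕ}
    (h : ∀ v, IsLeast (ν.support : Set ι) v → ∃ a ∈ A, a ≤ v) (c : R) :
    koszulHomotopy divLeastVar (Pi.single A (monomial ν c)) = 0 := by
  funext T
  by_cases hex : ∃ w, (∀ a ∈ A, w < a) ∧ T = insert w A
  · obtain ⟨w, hw, rfl⟩ := hex
    rw [koszulHomotopy_single_apply_insert _ hw, divLeastVar_monomial, if_neg, Pi.zero_apply]
    intro hw'
    obtain ⟨a, ha, haw⟩ := h w hw'
    exact (hw a ha).not_ge haw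
  · simp only [not_exists, not_and] at hex
    exact koszulHomotopy_single_apply_of_ne_insert _ hex _

end Contraction

section PolynomialKoszul

variable {R : Type*} [CommRing R] {ι : Type*} [LinearOrder ι] [Fintype ι]

local notation "∂[" N "]" => koszulDiff N (X : ι → MvPolynomial ι R)

lemma koszulDiff_koszulHomotopy_single_of_isLeast {T₀ : Finset ι} {ν : ι →₀ ℕ} {u : ι}
    (hν : IsLeast (ν.support : Set ι) u) (hu : ∀ a ∈ T₀, u < a) (c : R) :
    ∂[MvPolynomial ι R] (koszulHomotopy divLeastVar (Pi.single T₀ (monomial ν c)))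
      + koszulHomotopy divLeastVar (∂[MvPolynomial ι R] (Pi.single T₀ (monomial ν c)))
      = Pi.single T₀ (monomial ν c) := by
  have huT₀ : u ∉ T₀ := fun h => (hu u h).false
  have hle : Finsupp.single u 1 ≤ ν :=
    Finsupp.single_le_iff.mpr (Nat.one_le_iff_ne_zero.mpr (Finsupp.isLeast_support_iff.mp hν).1)
  rw [koszulHomotopy_single_monomial_of_isLeast hν hu, koszulDiff_single, sum_insert huT₀,
    erase_insert huT₀, koszulSign_of_forall_le fun a ha => (hu a ha).le, one_smul,
    X_smul_monomial, tsub_add_cancel_of_le hle, koszulDiff_single, map_sum, add_assoc,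
    add_eq_left, ← sum_add_distrib]
  refine sum_eq_zero fun t ht => ?_
  have hut : u < t := hu t ht
  have hA : ∀ a ∈ T₀.erase t, u < a := fun a ha => hu a (mem_of_mem_erase ha)
  rw [erase_insert_of_ne hut.ne, koszulSign_insert_of_lt hut fun h => huT₀ (mem_of_mem_erase h),
    X_smul_monomial, X_smul_monomial, koszulHomotopy_single_zsmul,
    koszulHomotopy_single_monomial_of_isLeast (Finsupp.isLeast_support_add_single hν hut.le) hA,
    tsub_add_eq_add_tsub hle, neg_smul, Pi.single_neg, Pi.single_smul', neg_add_cancel]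

lemma koszulDiff_koszulHomotopy_single_of_min'_le {T₀ : Finset ι} (hT₀ : T₀.Nonempty)
    {ν : ι →₀ ℕ} (hν : ∀ s ∈ ν.support, T₀.min' hT₀ ≤ s) (c : R) :
    ∂[MvPolynomial ι R] (koszulHomotopy divLeastVar (Pi.single T₀ (monomial ν c)))
      + koszulHomotopy divLeastVar (∂[MvPolynomial ι R] (Pi.single T₀ (monomial ν c)))
      = Pi.single T₀ (monomial ν c) := by
  set u := T₀.min' hT₀
  have huT₀ : u ∈ T₀ := min'_mem T₀ hT₀
  have hsupp : ∀ t ∈ T₀, ∀ v, IsLeast ((ν + Finsupp.single t 1).support : Set ι) v → u ≤ v := by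
    intro t ht v hv
    by_cases hvt : v = t
    · exact hvt ▸ min'_le T₀ t ht
    · refine hν v (Finsupp.mem_support_iff.mpr fun h0 => ?_)
      simpa [h0, Finsupp.single_apply, Ne.symm hvt] using hv.1
  rw [koszulHomotopy_single_monomial_eq_zero (fun v hv => ⟨u, huT₀, hν v hv.1⟩), map_zero,
    zero_add, koszulDiff_single, map_sum, sum_eq_single_of_mem u huT₀]
  · have hA : ∀ a ∈ T₀.erase u, u < a :=
      fun a ha => lt_of_le_of_ne (min'_le T₀ a (mem_of_mem_erase ha)) (ne_of_mem_erase ha).symm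
    have hleast : IsLeast ((ν + Finsupp.single u 1).support : Set ι) u := by
      refine Finsupp.isLeast_support_iff.mpr ⟨by simp, fun s hs => ?_⟩
      simp [hs.ne', Finsupp.notMem_support_iff.mp fun h => (hν s h).not_gt hs]
    rw [koszulSign_of_forall_le fun a ha => (hA a ha).le, one_smul, X_smul_monomial,
      koszulHomotopy_single_monomial_of_isLeast hleast hA, insert_erase huT₀, add_tsub_cancel_right]
  · intro t ht htu
    rw [X_smul_monomial, koszulHomotopy_single_zsmul, koszulHomotopy_single_monomial_eq_zero
      (fun v hv => ⟨u, mem_erase.mpr ⟨Ne.symm htu, huT₀⟩, hsupp t ht v hv⟩), smul_zero]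

lemma koszulDiff_koszulHomotopy_add_single_monomial (T₀ : Finset ι) (ν : ι →₀ ℕ) (c : R) :
    ∂[MvPolynomial ι R] (koszulHomotopy divLeastVar (Pi.single T₀ (monomial ν c)))
      + koszulHomotopy divLeastVar (∂[MvPolynomial ι R] (Pi.single T₀ (monomial ν c)))
      + Pi.single (∅ : Finset ι)
          (C (constantCoeff ((Pi.single T₀ (monomial ν c) : Finset ι → MvPolynomial ι R) ∅)))
      = Pi.single T₀ (monomial ν c) := by
  by_cases hC : ∃ u, IsLeast (ν.support : Set ι) u ∧ ∀ a ∈ T₀, u < a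
  · obtain ⟨u, hν, hu⟩ := hC
    have hconst : constantCoeff ((Pi.single T₀ (monomial ν c) : Finset ι → _) ∅) = 0 := by
      rw [Pi.single_apply]
      split_ifs
      · rw [constantCoeff_monomial, if_neg]
        rintro rfl
        simpa using hν.1
      · exact map_zero _
    rw [koszulDiff_koszulHomotopy_single_of_isLeast hν hu, hconst, map_zero, Pi.single_zero,
      add_zero]
  obtain rfl | hT₀ := T₀.eq_empty_or_nonempty
  · obtain rfl : ν = 0 := by
      by_contra hν
      exact hC ⟨_, isLeast_min' _ (Finsupp.support_nonempty_iff.mpr hν), by simp⟩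
    rw [koszulHomotopy_single_monomial_eq_zero fun v hv => by simpa using hv.1]
    simp [koszulDiff_single]
  · have hν : ∀ s ∈ ν.support, T₀.min' hT₀ ≤ s := by
      intro s hs
      by_contra hlt
      refine hC ⟨_, isLeast_min' _ ⟨s, hs⟩, fun a ha => ?_⟩
      exact (min'_le _ s hs).trans_lt ((not_le.mp hlt).trans_le (min'_le T₀ a ha))
    rw [koszulDiff_koszulHomotopy_single_of_min'_le hT₀ hν,
      Pi.single_eq_of_ne hT₀.ne_empty.symm, map_zero, map_zero, Pi.single_zero, add_zero]

theorem koszulDiff_koszulHomotopy_add (ω : Finset ι → MvPolynomial ι R) :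
    ∂[MvPolynomial ι R] (koszulHomotopy divLeastVar ω)
      + koszulHomotopy divLeastVar (∂[MvPolynomial ι R] ω)
      + Pi.single (∅ : Finset ι) (C (constantCoeff (ω ∅))) = ω := by
  induction ω using Pi.single_induction with
  | zero => simp
  | add ω ω' h h' =>
    simp only [map_add, Pi.add_apply, Pi.single_add]
    linear_combination h + h'
  | single T₀ p =>
    induction p using MvPolynomial.induction_on' with
    | monomial ν c => exact koszulDiff_koszulHomotopy_add_single_monomial T₀ ν c
    | add p q hp hq =>
      simp only [Pi.single_add, map_add, Pi.add_apply] at hp hq ⊢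
      linear_combination hp + hq

variable (R) in
noncomputable def freeKoszulHomotopy (B : Type*) :
    (Finset ι → (B →₀ MvPolynomial ι R)) →+ (Finset ι → (B →₀ MvPolynomial ι R)) :=
  koszulHomotopy fun u => Finsupp.mapRange.addMonoidHom (divLeastVar u)

theorem koszulDiff_freeKoszulHomotopy_add {B : Type*} (ω : Finset ι → (B →₀ MvPolynomial ι R))
    (hω : ∀ b, constantCoeff (ω ∅ b) = 0) :
    ∂[B →₀ MvPolynomial ι R] (freeKoszulHomotopy R B ω)
      + freeKoszulHomotopy R B (∂[B →₀ MvPolynomial ι R] ω) = ω := by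
  refine funext fun T => Finsupp.ext fun b => ?_
  let π : (B →₀ MvPolynomial ι R) →ₗ[MvPolynomial ι R] MvPolynomial ι R := Finsupp.lapply b
  have hkos (ξ : Finset ι → (B →₀ MvPolynomial ι R)) :
      ∂[MvPolynomial ι R] (π ∘ ξ) = π ∘ ∂[B →₀ MvPolynomial ι R] ξ :=
    koszulDiff_comp _ π ξ
  have hhom (ξ : Finset ι → (B →₀ MvPolynomial ι R)) :
      koszulHomotopy divLeastVar (π ∘ ξ) = π ∘ freeKoszulHomotopy R B ξ :=
    koszulHomotopy_comp (δ := fun u => Finsupp.mapRange.addMonoidHom (divLeastVar u))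
      π.toAddMonoidHom (fun _ _ => rfl) ξ
  have h := congrFun (koszulDiff_koszulHomotopy_add (π ∘ ω)) T
  rw [hhom, hkos, hkos, hhom, Function.comp_apply, Finsupp.lapply_apply, hω b, map_zero,
    Pi.single_zero, add_zero] at h
  simpa [π] using h

lemma constantCoeff_koszulDiff_apply {B : Type*} (ω : Finset ι → (B →₀ MvPolynomial ι R))
    (T : Finset ι) (b : B) : constantCoeff (∂[B →₀ MvPolynomial ι R] ω T b) = 0 := by
  simp [koszulDiff_apply, Finsupp.finsetSum_apply]

end PolynomialKoszul

section GradedModule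

variable {k : Type*} [CommSemiring k] {σ : Type*} {M : Type*} [AddCommMonoid M]
  [Module (MvPolynomial σ k) M] [Module k M]
  {𝒜 : ℤ → Submodule k M} {w : σ → ℤ}

lemma X_pow_smul_mem (hgr : ∀ t e, ∀ m ∈ 𝒜 e, (X t : MvPolynomial σ k) • m ∈ 𝒜 (e + w t))
    (t : σ) (j : ℕ) {e : ℤ} {m : M} (hm : m ∈ 𝒜 e) :
    (X t : MvPolynomial σ k) ^ j • m ∈ 𝒜 (e + j • w t) := by
  induction j with
  | zero => simpa using hm
  | succ j ih =>
    rw [pow_succ', mul_smul, succ_nsmul, ← add_assoc]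
    exact hgr t _ _ ih

variable [IsScalarTower k (MvPolynomial σ k) M]

lemma monomial_smul_mem (hgr : ∀ t e, ∀ m ∈ 𝒜 e, (X t : MvPolynomial σ k) • m ∈ 𝒜 (e + w t))
    (ν : σ →₀ ℕ) (c : k) {e : ℤ} {m : M} (hm : m ∈ 𝒜 e) :
    monomial ν c • m ∈ 𝒜 (e + Finsupp.weight w ν) := by
  induction ν using Finsupp.induction with
  | zero =>
    rw [monomial_zero', ← algebraMap_eq, algebraMap_smul, map_zero, add_zero]
    exact Submodule.smul_mem _ c hm
  | single_add t j ν _ _ ih =>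
    rw [monomial_single_add, mul_smul, map_add, Finsupp.weight_single, add_comm (j • w t),
      ← add_assoc]
    exact X_pow_smul_mem hgr t j ih

lemma smul_mem_of_mem_weightedHomogeneousSubmodule
    (hgr : ∀ t e, ∀ m ∈ 𝒜 e, (X t : MvPolynomial σ k) • m ∈ 𝒜 (e + w t))
    {p : MvPolynomial σ k} {δ : ℤ} (hp : p ∈ weightedHomogeneousSubmodule k w δ)
    {e : ℤ} {m : M} (hm : m ∈ 𝒜 e) : p • m ∈ 𝒜 (e + δ) := by
  rw [p.as_sum, Finset.sum_smul]
  refine Submodule.sum_mem _ fun ν hν => ?_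
  rw [← (mem_weightedHomogeneousSubmodule _ _ _ _).mp hp (mem_support_iff.mp hν)]
  exact monomial_smul_mem hgr ν _ hm

end GradedModule

theorem Finset.sum_le_sum_of_card_eq_of_forall_le {ι M : Type*} [AddCommMonoid M] [LinearOrder M]
    [IsOrderedAddMonoid M] {f : ι → M} {A B : Finset ι}
    (hcard : #A = #B) (hle : ∀ a ∈ A, ∀ b ∈ B, f a ≤ f b) :
    ∑ a ∈ A, f a ≤ ∑ b ∈ B, f b := by
  obtain rfl | hA := A.eq_empty_or_nonempty
  · simp [card_eq_zero.mp (hcard.symm.trans card_empty)]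
  obtain ⟨a₀, ha₀, hmax⟩ := A.exists_max_image f hA
  calc ∑ a ∈ A, f a ≤ #A • f a₀ := sum_le_card_nsmul _ _ _ hmax
    _ = #B • f a₀ := by rw [hcard]
    _ ≤ ∑ b ∈ B, f b := card_nsmul_le_sum _ _ _ fun b hb => hle a₀ ha₀ b hb

theorem Monotone.sum_filter_val_lt_le_sum {m q : ℕ} {f : Fin m → ℤ} (hf : Monotone f)
    {T : Finset (Fin m)} (hT : #T = q) :
    ∑ t ∈ univ.filter (fun t : Fin m => (t : ℕ) < q), f t ≤ ∑ t ∈ T, f t := by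
  set L : Finset (Fin m) := {t | (t : ℕ) < q}
  have hL : #L = #T := by
    rw [Fin.card_filter_val_lt, ← hT, min_eq_right (by simpa using T.card_le_univ)]
  have hle : ∑ a ∈ L \ T, f a ≤ ∑ b ∈ T \ L, f b := by
    refine sum_le_sum_of_card_eq_of_forall_le (card_sdiff_eq_card_sdiff_iff.mpr hL)
      fun a ha b hb => hf ?_
    simp only [L, mem_sdiff, mem_filter, mem_univ, true_and, not_lt] at ha hb
    exact Fin.le_def.mpr (by omega)
  linarith [sum_sdiff_sub_sum_sdiff (s₁ := T) (s₂ := L) (f := f)]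

lemma Finsupp.linearMap_apply_eq_sum {R B N : Type*} [CommSemiring R] [AddCommMonoid N]
    [Module R N] (f : (B →₀ R) →ₗ[R] N) (v : B →₀ R) :
    f v = v.sum fun b c => c • f (Finsupp.single b 1) := by
  conv_lhs => rw [← Finsupp.sum_single v]
  rw [map_finsuppSum]
  exact Finsupp.sum_congr fun b _ => by rw [← Finsupp.smul_single_one, map_smul]

namespace GradedFreeRes

variable {k : Type} [Field k] {n : ℕ} {d : Fin (n + 1) → ℕ} {M : Type} [AddCommGroup M]
  [Module (MvPolynomial (Fin (n + 1)) k) M] [Module k M] {𝒜 : ℤ → Submodule k M}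
  (Fr : GradedFreeRes k n d M 𝒜)

local notation "S" => MvPolynomial (Fin (n + 1)) k

local notation "∂[" N "]" => koszulDiff N (X : Fin (n + 1) → MvPolynomial (Fin (n + 1)) k)

/-- `v` is homogeneous of degree `f` in the graded free module `⊕_b S(-deg p b)`. -/
def IsHomogeneous (p : ℕ) (f : ℤ) (v : Fr.B p →₀ S) : Prop :=
  ∀ b, v b ∈ weightedHomogeneousSubmodule k (fun t => (d t : ℤ)) (f - Fr.deg p b)

lemma IsHomogeneous.D {p : ℕ} {f : ℤ} {v : Fr.B (p + 1) →₀ S} (hv : Fr.IsHomogeneous (p + 1) f v) :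
    Fr.IsHomogeneous p f (Fr.D p v) := by
  intro b'
  rw [Finsupp.linearMap_apply_eq_sum, Finsupp.sum_apply]
  refine Submodule.sum_mem _ fun b _ => ?_
  have h := ((mem_weightedHomogeneousSubmodule _ _ _ _).mp (hv b)).mul
    ((mem_weightedHomogeneousSubmodule _ _ _ _).mp (Fr.homog p b b'))
  rw [sub_add_sub_cancel] at h
  exact h

lemma constantCoeff_D (p : ℕ) (v : Fr.B (p + 1) →₀ S) (b' : Fr.B p) :
    constantCoeff (Fr.D p v b') = 0 := by
  rw [Finsupp.linearMap_apply_eq_sum, Finsupp.sum_apply, map_finsuppSum]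
  exact Finset.sum_eq_zero fun b _ => by
    simp only [Finsupp.smul_apply, smul_eq_mul, map_mul, Fr.minimal p b b', mul_zero]

lemma aug_mem [IsScalarTower k S M]
    (hgr : ∀ t e, ∀ m ∈ 𝒜 e, (X t : S) • m ∈ 𝒜 (e + d t))
    {f : ℤ} {v : Fr.B 0 →₀ S} (hv : Fr.IsHomogeneous 0 f v) : Fr.aug v ∈ 𝒜 f := by
  rw [Finsupp.linearMap_apply_eq_sum]
  refine Submodule.sum_mem _ fun b _ => ?_
  have h := smul_mem_of_mem_weightedHomogeneousSubmodule hgr (hv b) (Fr.aug_hom b)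
  rwa [add_sub_cancel] at h

lemma isHomogeneous_freeKoszulHomotopy {p : ℕ} {e : ℤ} {ξ : Finset (Fin (n + 1)) → (Fr.B p →₀ S)}
    (hξ : ∀ T, Fr.IsHomogeneous p (e - ∑ t ∈ T, (d t : ℤ)) (ξ T)) (T : Finset (Fin (n + 1))) :
    Fr.IsHomogeneous p (e - ∑ t ∈ T, (d t : ℤ)) (freeKoszulHomotopy k (Fr.B p) ξ T) := by
  intro b
  simp only [freeKoszulHomotopy, koszulHomotopy, AddMonoidHom.coe_mk, ZeroHom.coe_mk]
  split_ifs with hne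
  · rw [Finsupp.mapRange.addMonoidHom_apply, Finsupp.mapRange_apply]
    have hdeg : e - ∑ t ∈ T.erase (T.min' hne), (d t : ℤ) - Fr.deg p b - d (T.min' hne)
        = e - ∑ t ∈ T, (d t : ℤ) - Fr.deg p b := by
      rw [← Finset.add_sum_erase _ _ (T.min'_mem hne)]
      ring
    have h :=
      divLeastVar_mem_weightedHomogeneousSubmodule (hξ (T.erase (T.min' hne)) b) (T.min' hne)
    rw [hdeg] at h
    exact h
  · exact zero_mem _

lemma exists_eq_D_of_lt_sum [IsScalarTower k S M] (hmono : Monotone d)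
    (hgr : ∀ t e, ∀ m ∈ 𝒜 e, (X t : S) • m ∈ 𝒜 (e + d t)) (hneg : ∀ e : ℤ, e < 0 → 𝒜 e = ⊥)
    {q : ℕ} {e : ℤ} {ζ : Finset (Fin (n + 1)) → (Fr.B 0 →₀ S)}
    (hhom : ∀ T, Fr.IsHomogeneous 0 (e - ∑ t ∈ T, (d t : ℤ)) (ζ T))
    (hslot : ∀ T, #T ≠ q → ζ T = 0)
    (he : e < ∑ t ∈ univ.filter (fun t : Fin (n + 1) => (t : ℕ) < q), (d t : ℤ)) :
    ∃ β, ζ = Fr.D 0 ∘ β := by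
  have hlift : ∀ T, ∃ v, Fr.D 0 v = ζ T := by
    intro T
    by_cases hT : #T = q
    · refine (Fr.exact_zero _).mp ?_
      have hmem := Fr.aug_mem hgr (hhom T)
      have hmono' : Monotone fun t => (d t : ℤ) := fun a b h => Nat.cast_le.mpr (hmono h)
      rw [hneg _ (by linarith [hmono'.sum_filter_val_lt_le_sum hT])] at hmem
      exact (Submodule.mem_bot k).mp hmem
    · exact ⟨0, by rw [map_zero, hslot T hT]⟩
  choose β hβ using hlift
  exact ⟨β, funext fun T => (hβ T).symm⟩

theorem exists_eq_koszulDiff_add_D [IsScalarTower k S M] (hmono : Monotone d)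
    (hgr : ∀ t e, ∀ m ∈ 𝒜 e, (X t : S) • m ∈ 𝒜 (e + d t)) (hneg : ∀ e : ℤ, e < 0 → 𝒜 e = ⊥)
    (p : ℕ) : ∀ {q : ℕ} {e : ℤ} {ζ : Finset (Fin (n + 1)) → (Fr.B p →₀ S)},
      (∀ T, Fr.IsHomogeneous p (e - ∑ t ∈ T, (d t : ℤ)) (ζ T)) → (∀ T, #T ≠ q → ζ T = 0) →
      e < ∑ t ∈ univ.filter (fun t : Fin (n + 1) => (t : ℕ) < p + q), (d t : ℤ) →
      (∃ ρ, ∂[Fr.B p →₀ S] ζ = Fr.D p ∘ ρ) → ∃ α β, ζ = ∂[Fr.B p →₀ S] α + Fr.D p ∘ β := by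
  induction p with
  | zero =>
    intro q e ζ hhom hslot he _
    obtain ⟨β, hβ⟩ := Fr.exists_eq_D_of_lt_sum hmono hgr hneg hhom hslot (by simpa using he)
    exact ⟨0, β, by rw [map_zero, zero_add, hβ]⟩
  | succ p ih =>
    intro q e ζ hhom hslot he ⟨ρ, hρ⟩
    set ξ := Fr.D p ∘ ζ
    have hξ : ∂[Fr.B p →₀ S] ξ = 0 := by
      rw [koszulDiff_comp, hρ]
      exact funext fun T => (Fr.exact_succ p).apply_apply_eq_zero (ρ T)
    have hη : ∂[Fr.B p →₀ S] (freeKoszulHomotopy k (Fr.B p) ξ) = ξ := by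
      simpa [hξ] using koszulDiff_freeKoszulHomotopy_add ξ fun b => Fr.constantCoeff_D p (ζ ∅) b
    have hslotξ : ∀ T, #T ≠ q → ξ T = 0 := fun T hT => by
      simp only [ξ, Function.comp_apply, hslot T hT, map_zero]
    obtain ⟨α, β, hαβ⟩ := ih (ζ := freeKoszulHomotopy k (Fr.B p) ξ)
      (Fr.isHomogeneous_freeKoszulHomotopy fun T => (hhom T).D)
      (fun T => koszulHomotopy_apply_eq_zero_of_card_ne _ hslotξ)
      (by rwa [← add_assoc, add_right_comm]) ⟨ζ, hη⟩
    have hcycle : ∀ T, Fr.D p (ζ T - ∂[Fr.B (p + 1) →₀ S] β T) = 0 := by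
      intro T
      have h := congrFun (congrArg (∂[Fr.B p →₀ S]) hαβ) T
      rw [hη, map_add, koszulDiff_koszulDiff, zero_add, koszulDiff_comp] at h
      rw [map_sub]
      exact sub_eq_zero.mpr h
    choose γ hγ using fun T => (Fr.exact_succ p _).mp (hcycle T)
    exact ⟨β, γ, funext fun T => by simp [hγ]⟩

end GradedFreeRes

theorem stmt_1_general (k : Type) [Field k] (n : ℕ) (d : Fin (n + 1) → ℕ)
    (hmono : Monotone d)
    (M : Type) [AddCommGroup M] [Module (MvPolynomial (Fin (n + 1)) k) M]
    [Module k M] [IsScalarTower k (MvPolynomial (Fin (n + 1)) k) M]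
    (𝒜 : ℤ → Submodule k M)
    (hgr : ∀ (t : Fin (n + 1)) (e : ℤ), ∀ m ∈ 𝒜 e,
      (X t : MvPolynomial (Fin (n + 1)) k) • m ∈ 𝒜 (e + d t))
    (hneg : ∀ e : ℤ, e < 0 → 𝒜 e = ⊥)
    (Fr : GradedFreeRes k n d M 𝒜)
    (i : ℕ) (j : ℤ) (hβ : ∃ b : Fr.B i, Fr.deg i b = j) :
    (∑ t ∈ Finset.univ.filter (fun t : Fin (n + 1) => (t : ℕ) < i), (d t : ℤ)) ≤ j := by
  obtain ⟨b₀, rfl⟩ := hβ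
  by_contra! hlt
  let ζ : Finset (Fin (n + 1)) → (Fr.B i →₀ MvPolynomial (Fin (n + 1)) k) :=
    Pi.single ∅ (Finsupp.single b₀ 1)
  have hhom : ∀ T, Fr.IsHomogeneous i (Fr.deg i b₀ - ∑ t ∈ T, (d t : ℤ)) (ζ T) := by
    intro T b
    rcases eq_or_ne T ∅ with rfl | hT
    · rcases eq_or_ne b b₀ with rfl | hb
      · simpa [ζ] using isWeightedHomogeneous_one k _
      · simp [ζ, Finsupp.single_eq_of_ne hb]
    · simp [ζ, Pi.single_eq_of_ne hT]
  have hslot : ∀ T, #T ≠ 0 → ζ T = 0 := fun T hT =>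
    Pi.single_eq_of_ne (card_ne_zero.mp hT).ne_empty _
  obtain ⟨α, β, hζ⟩ := Fr.exists_eq_koszulDiff_add_D hmono hgr hneg i hhom hslot
    (by simpa using hlt) ⟨0, funext fun T => by simp [ζ, koszulDiff_single]⟩
  have h := congrArg (fun ω => constantCoeff (ω ∅ b₀)) hζ
  simp [ζ, constantCoeff_koszulDiff_apply, GradedFreeRes.constantCoeff_D] at h

theorem stmt_1 (k : Type) [Field k] (n : ℕ) (d : Fin (n + 1) → ℕ)
    (hmono : Monotone d) (hpos : ∀ t, 0 < d t)
    (M : Type) [AddCommGroup M] [Module (MvPolynomial (Fin (n + 1)) k) M]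
    [Module k M] [IsScalarTower k (MvPolynomial (Fin (n + 1)) k) M]
    (𝒜 : ℤ → Submodule k M)
    (hdec : DirectSum.IsInternal 𝒜)
    (hgr : ∀ (t : Fin (n + 1)) (e : ℤ), ∀ m ∈ 𝒜 e,
      (X t : MvPolynomial (Fin (n + 1)) k) • m ∈ 𝒜 (e + d t))
    (hfg : Module.Finite (MvPolynomial (Fin (n + 1)) k) M)
    (hneg : ∀ e : ℤ, e < 0 → 𝒜 e = ⊥) (h0 : 𝒜 0 ≠ ⊥)
    (Fr : GradedFreeRes k n d M 𝒜)
    (i : ℕ) (j : ℤ) (hβ : ∃ b : Fr.B i, Fr.deg i b = j) :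
    (∑ t ∈ Finset.univ.filter (fun t : Fin (n + 1) => (t : ℕ) < i), (d t : ℤ)) ≤ j :=
  stmt_1_general k n d hmono M 𝒜 hgr hneg Fr i j hβ
end

section
/- Let S = k[x_0, ..., x_n] be a Z-graded polynomial ring with deg(x_i) = d_i positive integers in increasing order, M a finitely generated graded S-module with M_0 ≠ 0 and M_{<0} = 0, and suppose x_ℓ is a non-zero-divisor on M. Define w'_i = w_i for i < ℓ and w'_i = w_{i+1} − d_ℓ for i ≥ ℓ, where w_i is the sum of the i smallest weights. Then β_{i,j}(M) ≠ 0 implies j ≥ w'_i. -/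
/-!
Induction on `i`; for `i = 0` the bound is `M_{<0} = 0`. If a generator `b` of `F_{i+1}` had
degree `< w'_{i+1}`, each entry of its column `D(e_b)` would be homogeneous of degree
`< w'_{i+1} - w'_i`, so it would only involve variables `x_t` with `d_t < w'_{i+1} - w'_i`, and by
monotonicity of `d` at most `i` of these differ from `x_ℓ`. No nonzero cycle of `F_i` has this
property: dividing out the variables and discarding all but one of them into an ideal
`(x_u : u ∈ U)` produces `z` with `D z ≡ 0` modulo `(x_u)` and an entry with nonzero constant term.
But `F ⊗ S/(x_u : u ∈ U)` is exact at `F_{s+1}` once `|U \ {ℓ}| ≤ s` (a Koszul-type induction on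
`U`, in which `x_ℓ` is free because it is `M`-regular), so `z` is a boundary modulo `(x_u)` and by
minimality has no constant terms.
-/

open MvPolynomial

namespace MvPolynomial

variable {σ R : Type*} [CommRing R]

noncomputable def varIdeal (U : Finset σ) : Ideal (MvPolynomial σ R) :=
  Ideal.span (X '' U)

theorem mem_varIdeal {U : Finset σ} {p : MvPolynomial σ R} :
    p ∈ varIdeal U ↔ ∀ m ∈ p.support, ∃ i ∈ U, m i ≠ 0 :=
  mem_ideal_span_X_image

theorem varIdeal_empty : varIdeal (∅ : Finset σ) = (⊥ : Ideal (MvPolynomial σ R)) := by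
  simp [varIdeal]

theorem X_mem_varIdeal {U : Finset σ} {i : σ} (hi : i ∈ U) :
    (X i : MvPolynomial σ R) ∈ varIdeal U :=
  Ideal.subset_span ⟨i, hi, rfl⟩

theorem varIdeal_mono {U V : Finset σ} (h : U ⊆ V) :
    (varIdeal U : Ideal (MvPolynomial σ R)) ≤ varIdeal V :=
  Ideal.span_mono (Set.image_mono (Finset.coe_subset.mpr h))

theorem constantCoeff_eq_zero_of_mem_varIdeal {U : Finset σ} {p : MvPolynomial σ R}
    (hp : p ∈ varIdeal U) : constantCoeff p = 0 := by
  by_contra h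
  obtain ⟨i, -, hi⟩ := mem_varIdeal.mp hp 0 (by simpa [constantCoeff_eq] using h)
  exact hi rfl

theorem mem_varIdeal_of_X_mul_mem {U : Finset σ} {x : σ} (hx : x ∉ U)
    {p : MvPolynomial σ R} (hp : X x * p ∈ varIdeal U) : p ∈ varIdeal U := by
  refine mem_varIdeal.mpr fun m hm => ?_
  obtain ⟨i, hiU, hi⟩ := mem_varIdeal.mp hp (Finsupp.single x 1 + m)
    (by rw [support_X_mul]; exact Finset.mem_map_of_mem _ hm)
  have hix : x ≠ i := fun h => hx (h ▸ hiU)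
  exact ⟨i, hiU, by simpa [Finsupp.single_apply, hix] using hi⟩

theorem vars_subset_vars_X_mul (x : σ) (p : MvPolynomial σ R) : p.vars ⊆ (X x * p).vars := by
  classical
  intro i hi
  obtain ⟨m, hm, him⟩ := (mem_vars_iff_mem_support i).mp hi
  refine (mem_vars_iff_mem_support i).mpr ⟨Finsupp.single x 1 + m, ?_, ?_⟩
  · rw [support_X_mul]; exact Finset.mem_map_of_mem _ hm
  · rw [Finsupp.mem_support_iff] at him ⊢
    simp [him]

theorem zero_modMonomial (s : σ →₀ ℕ) : (0 : MvPolynomial σ R).modMonomial s = 0 := by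
  simpa using divMonomial_add_modMonomial (0 : MvPolynomial σ R) s

theorem mem_support_modMonomial_single {p : MvPolynomial σ R} {x : σ} {m : σ →₀ ℕ} :
    m ∈ (p.modMonomial (Finsupp.single x 1)).support ↔ m ∈ p.support ∧ m x = 0 := by
  by_cases h : m x = 0
  · have : ¬ Finsupp.single x 1 ≤ m := by simp [Finsupp.single_le_iff, h]
    simp [mem_support_iff, coeff_modMonomial_of_not_le _ this, h]
  · have : Finsupp.single x 1 ≤ m := by simpa [Finsupp.single_le_iff, Nat.one_le_iff_ne_zero]
    simp [mem_support_iff, coeff_modMonomial_of_le _ this, h]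

theorem vars_modMonomial_single_subset [DecidableEq σ] (p : MvPolynomial σ R) (x : σ) :
    (p.modMonomial (Finsupp.single x 1)).vars ⊆ p.vars.erase x := by
  intro i hi
  obtain ⟨m, hm, him⟩ := (mem_vars_iff_mem_support i).mp hi
  rw [mem_support_modMonomial_single] at hm
  refine Finset.mem_erase.mpr ⟨?_, (mem_vars_iff_mem_support i).mpr ⟨m, hm.1, him⟩⟩
  rintro rfl
  exact Finsupp.mem_support_iff.mp him hm.2

theorem modMonomial_single_mem_varIdeal [DecidableEq σ] {U : Finset σ} {x : σ}
    {p : MvPolynomial σ R} (hp : p ∈ varIdeal (insert x U)) :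
    p.modMonomial (Finsupp.single x 1) ∈ varIdeal U := by
  refine mem_varIdeal.mpr fun m hm => ?_
  rw [mem_support_modMonomial_single] at hm
  obtain ⟨i, hi, hmi⟩ := mem_varIdeal.mp hp m hm.1
  rcases Finset.mem_insert.mp hi with rfl | hiU
  · exact absurd hm.2 hmi
  · exact ⟨i, hiU, hmi⟩

theorem constantCoeff_ne_zero_of_vars_subset_singleton {x : σ} {p : MvPolynomial σ R}
    (hp : p.vars ⊆ {x}) (hdvd : ¬ X x ∣ p) : constantCoeff p ≠ 0 := by
  classical
  refine fun h0 => hdvd ?_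
  have : p ∈ varIdeal {x} := by
    refine mem_varIdeal.mpr fun m hm => ⟨x, Finset.mem_singleton_self x, fun hmx => ?_⟩
    have hm0 : m = 0 := by
      ext i
      by_contra hi
      have := hp ((mem_vars_iff_mem_support i).mpr ⟨m, hm, Finsupp.mem_support_iff.mpr hi⟩)
      exact hi (Finset.mem_singleton.mp this ▸ hmx)
    exact mem_support_iff.mp hm (by rw [hm0, ← constantCoeff_eq, h0])
  simpa [varIdeal, Ideal.mem_span_singleton] using this

theorem IsWeightedHomogeneous.le_of_mem_vars {M : Type*} [AddCommMonoid M] [PartialOrder M]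
    [IsOrderedAddMonoid M] {w : σ → M} (hw : ∀ i, 0 ≤ w i) {p : MvPolynomial σ R} {e : M}
    (hp : IsWeightedHomogeneous w p e) {i : σ} (hi : i ∈ p.vars) : w i ≤ e := by
  classical
  obtain ⟨m, hm, him⟩ := (mem_vars_iff_mem_support i).mp hi
  rw [← hp (mem_support_iff.mp hm)]
  exact Finsupp.le_weight_of_ne_zero hw (Finsupp.mem_support_iff.mp him)

section Vectors

variable {A : Type*}

noncomputable def divXVec (x : σ) (z : A →₀ MvPolynomial σ R) : A →₀ MvPolynomial σ R :=
  z.mapRange (fun p => p.divMonomial (Finsupp.single x 1)) (zero_divMonomial _)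

noncomputable def modXVec (x : σ) (z : A →₀ MvPolynomial σ R) : A →₀ MvPolynomial σ R :=
  z.mapRange (fun p => p.modMonomial (Finsupp.single x 1)) (zero_modMonomial _)

@[simp]
theorem divXVec_apply (x : σ) (z : A →₀ MvPolynomial σ R) (a : A) :
    divXVec x z a = (z a).divMonomial (Finsupp.single x 1) :=
  Finsupp.mapRange_apply ..

@[simp]
theorem modXVec_apply (x : σ) (z : A →₀ MvPolynomial σ R) (a : A) :
    modXVec x z a = (z a).modMonomial (Finsupp.single x 1) :=
  Finsupp.mapRange_apply ..

theorem X_smul_divXVec_add_modXVec (x : σ) (z : A →₀ MvPolynomial σ R) :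
    (X x : MvPolynomial σ R) • divXVec x z + modXVec x z = z := by
  ext a : 1
  simpa using divMonomial_add_modMonomial_single (z a) x

theorem X_smul_divXVec_of_forall_X_dvd {x : σ} {z : A →₀ MvPolynomial σ R}
    (h : ∀ a, X x ∣ z a) : (X x : MvPolynomial σ R) • divXVec x z = z := by
  have hmod : modXVec x z = 0 := by
    ext a : 1
    simpa using X_dvd_iff_modMonomial_eq_zero.mp (h a)
  simpa [hmod] using X_smul_divXVec_add_modXVec x z

theorem exists_not_X_dvd_apply [IsDomain R] (P : (A →₀ MvPolynomial σ R) → Prop) (x : σ)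
    (hP : ∀ z, P ((X x : MvPolynomial σ R) • z) → P z) {z : A →₀ MvPolynomial σ R} (hz : z ≠ 0)
    (h : P z) : ∃ z', P z' ∧ ∃ a, ¬ X x ∣ z' a := by
  obtain ⟨a, ha⟩ : ∃ a, z a ≠ 0 := by
    by_contra! h'
    exact hz (Finsupp.ext h')
  induction hN : (z a).totalDegree using Nat.strong_induction_on generalizing z with
  | _ N ih =>
    by_cases hdvd : ∀ b, X x ∣ z b
    · have hz' := X_smul_divXVec_of_forall_X_dvd hdvd
      have ha' : divXVec x z a ≠ 0 := by
        rintro h0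
        apply ha
        rw [← hz', Finsupp.smul_apply, h0, smul_zero]
      have hdeg : (z a).totalDegree = 1 + (divXVec x z a).totalDegree := by
        conv_lhs => rw [← hz', Finsupp.smul_apply, smul_eq_mul]
        rw [totalDegree_mul_of_isDomain (X_ne_zero x) ha', totalDegree_X]
      exact ih _ (by omega) (fun h0 => ha' (by simp [h0])) (hP _ (by rwa [hz'])) ha' rfl
    · exact ⟨z, h, not_forall.mp hdvd⟩

end Vectors

end MvPolynomial

section Weights

variable {n : ℕ}

def weightSum (d : Fin (n + 1) → ℕ) (m : ℕ) : ℤ :=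
  ∑ t ∈ Finset.univ.filter (fun t : Fin (n + 1) => (t : ℕ) < m), (d t : ℤ)

/-- For monotone `d` this is `w'_i`, the sum of the `i` smallest weights of the variables other
than `x_ℓ`. -/
def weightSumErase (d : Fin (n + 1) → ℕ) (ℓ : Fin (n + 1)) (i : ℕ) : ℤ :=
  if i < (ℓ : ℕ) then weightSum d i else weightSum d (i + 1) - d ℓ

variable {d : Fin (n + 1) → ℕ}

theorem weightSum_zero : weightSum d 0 = 0 := by
  simp [weightSum]

theorem weightSum_succ {m : ℕ} (hm : m < n + 1) :
    weightSum d (m + 1) = weightSum d m + d ⟨m, hm⟩ := by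
  have h : Finset.univ.filter (fun t : Fin (n + 1) => (t : ℕ) < m + 1) =
      insert ⟨m, hm⟩ (Finset.univ.filter fun t : Fin (n + 1) => (t : ℕ) < m) := by
    ext t
    simp only [Finset.mem_filter, Finset.mem_univ, true_and, Finset.mem_insert, Fin.ext_iff]
    omega
  rw [weightSum, h, Finset.sum_insert (by simp), add_comm]
  rfl

theorem weightSumErase_zero (ℓ : Fin (n + 1)) : weightSumErase d ℓ 0 = 0 := by
  rw [weightSumErase]
  split_ifs with h
  · exact weightSum_zero
  · rw [weightSum_succ (Nat.succ_pos n), weightSum_zero, zero_add, sub_eq_zero]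
    exact congrArg (fun t => (d t : ℤ)) (Fin.ext (by simp; omega))

theorem weightSumErase_succ_sub_le (hmono : Monotone d) {ℓ t : Fin (n + 1)} {i : ℕ}
    (ht : (if i < (ℓ : ℕ) then i else i + 1) ≤ t) :
    weightSumErase d ℓ (i + 1) - weightSumErase d ℓ i ≤ d t := by
  have hd : ∀ {m} (hm : m ≤ (t : ℕ)), (d ⟨m, by omega⟩ : ℤ) ≤ d t := fun hm => by
    exact_mod_cast hmono (Fin.mk_le_of_le_val hm)
  have hℓ := ℓ.isLt
  unfold weightSumErase
  split_ifs at ht ⊢ with h1 h2 h2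
  · rw [weightSum_succ (by omega)]; simpa using hd ht
  · omega
  · have hℓi : (ℓ : ℕ) = i + 1 := by omega
    rw [weightSum_succ (m := i + 1) (by omega), weightSum_succ (m := i) (by omega),
      show d ℓ = d ⟨i + 1, by omega⟩ from congrArg d (Fin.ext hℓi)]
    simpa using hd (by omega)
  · rw [weightSum_succ (m := i + 1) (by omega)]; simpa using hd ht

theorem card_erase_filter_lt_weightSumErase_gap_le (hmono : Monotone d) (ℓ : Fin (n + 1)) (i : ℕ) :
    ((Finset.univ.filter fun t : Fin (n + 1) =>
      (d t : ℤ) < weightSumErase d ℓ (i + 1) - weightSumErase d ℓ i).erase ℓ).card ≤ i := by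
  set c := if i < (ℓ : ℕ) then i else i + 1
  have hsub : (Finset.univ.filter fun t : Fin (n + 1) =>
      (d t : ℤ) < weightSumErase d ℓ (i + 1) - weightSumErase d ℓ i) ⊆
      Finset.univ.filter fun t : Fin (n + 1) => (t : ℕ) < c := by
    intro t
    simp only [Finset.mem_filter, Finset.mem_univ, true_and]
    contrapose!
    exact weightSumErase_succ_sub_le hmono
  refine (Finset.card_le_card (Finset.erase_subset_erase ℓ hsub)).trans ?_
  by_cases hi : i < (ℓ : ℕ)
  · simp only [c, if_pos hi]
    exact (Finset.card_erase_le).trans (Fin.card_filter_val_lt.trans_le (min_le_right _ _))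
  · simp only [c, if_neg hi]
    rw [Finset.card_erase_of_mem (by simp; omega), Fin.card_filter_val_lt]
    omega

end Weights

section LinearMap

variable {R A A' : Type*} [CommRing R] (L : (A →₀ R) →ₗ[R] (A' →₀ R))

theorem LinearMap.finsupp_apply_eq_sum (y : A →₀ R) (b : A') :
    L y b = y.sum fun a c => c * L (Finsupp.single a 1) b := by
  conv_lhs => rw [← Finsupp.sum_single y]
  simp only [map_finsuppSum, Finsupp.sum_apply]
  congr 1
  ext a c
  rw [← Finsupp.smul_single_one, map_smul, Finsupp.smul_apply, smul_eq_mul]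

theorem LinearMap.finsupp_apply_mem_of_forall_apply_mem {I : Ideal R} {y : A →₀ R}
    (hy : ∀ a, y a ∈ I) (b : A') : L y b ∈ I := by
  rw [L.finsupp_apply_eq_sum]
  exact Submodule.sum_mem _ fun a _ => I.mul_mem_right _ (hy a)

theorem LinearMap.finsupp_apply_mem_of_forall_single_apply_mem {I : Ideal R} {b : A'}
    (hL : ∀ a, L (Finsupp.single a 1) b ∈ I) (y : A →₀ R) : L y b ∈ I := by
  rw [L.finsupp_apply_eq_sum]
  exact Submodule.sum_mem _ fun a _ => I.mul_mem_left _ (hL a)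

end LinearMap

namespace GradedFreeRes

variable {k : Type} [Field k] {n : ℕ} {d : Fin (n + 1) → ℕ} {M : Type} [AddCommGroup M]
  [Module (MvPolynomial (Fin (n + 1)) k) M] [Module k M] {𝒜 : ℤ → Submodule k M}
  (Fr : GradedFreeRes k n d M 𝒜)

local notation "S" => MvPolynomial (Fin (n + 1)) k

theorem constantCoeff_D_apply (i : ℕ) (y : Fr.B (i + 1) →₀ S) (b : Fr.B i) :
    constantCoeff (Fr.D i y b) = 0 :=
  (Fr.D i).finsupp_apply_mem_of_forall_single_apply_mem (I := RingHom.ker constantCoeff)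
    (fun a => Fr.minimal i a b) y

theorem D_ne_single (i : ℕ) (y : Fr.B (i + 1) →₀ S) (b : Fr.B i) :
    Fr.D i y ≠ Finsupp.single b 1 := by
  intro h
  simpa [h] using Fr.constantCoeff_D_apply i y b

theorem D_D (i : ℕ) (y : Fr.B (i + 2) →₀ S) : Fr.D i (Fr.D (i + 1) y) = 0 :=
  (Fr.exact_succ i _).mpr ⟨y, rfl⟩

theorem aug_D (y : Fr.B 1 →₀ S) : Fr.aug (Fr.D 0 y) = 0 :=
  (Fr.exact_zero _).mpr ⟨y, rfl⟩

theorem D_single_ne_zero (i : ℕ) (b : Fr.B (i + 1)) : Fr.D i (Finsupp.single b 1) ≠ 0 := by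
  intro h
  obtain ⟨y, hy⟩ := (Fr.exact_succ i _).mp h
  exact Fr.D_ne_single (i + 1) y b hy

theorem deg_zero_nonneg (hneg : ∀ e : ℤ, e < 0 → 𝒜 e = ⊥) (b : Fr.B 0) : 0 ≤ Fr.deg 0 b := by
  by_contra! hb
  have h0 : Fr.aug (Finsupp.single b 1) = 0 := by simpa [hneg _ hb] using Fr.aug_hom b
  obtain ⟨y, hy⟩ := (Fr.exact_zero _).mp h0
  exact Fr.D_ne_single 0 y b hy

/-- Exactness of `F ⊗ S/(x_u : u ∈ U)` at `F_{t+1}`. -/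
def ExactModVars (U : Finset (Fin (n + 1))) (t : ℕ) : Prop :=
  ∀ y : Fr.B (t + 1) →₀ S, (∀ b, Fr.D t y b ∈ varIdeal U) →
    ∃ w : Fr.B (t + 2) →₀ S, ∀ b, (y - Fr.D (t + 1) w) b ∈ varIdeal U

theorem exactModVars_empty (t : ℕ) : Fr.ExactModVars ∅ t := by
  intro y hy
  obtain ⟨w, hw⟩ := (Fr.exact_succ t y).mp
    (Finsupp.ext fun b => by simpa [varIdeal_empty] using hy b)
  exact ⟨w, fun b => by simp [hw]⟩

theorem exactModVars_singleton_zero (ℓ : Fin (n + 1))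
    (hreg : ∀ m : M, (X ℓ : S) • m = 0 → m = 0) : Fr.ExactModVars {ℓ} 0 := by
  intro y hy
  have hmod : modXVec ℓ (Fr.D 0 y) = 0 := by
    ext b : 1
    simpa [varIdeal_empty] using modMonomial_single_mem_varIdeal (U := ∅) (by simpa using hy b)
  have hv : (X ℓ : S) • divXVec ℓ (Fr.D 0 y) = Fr.D 0 y := by
    simpa [hmod] using X_smul_divXVec_add_modXVec ℓ (Fr.D 0 y)
  obtain ⟨u, hu⟩ := (Fr.exact_zero _).mp (hreg _ (by rw [← map_smul, hv, aug_D]))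
  obtain ⟨w, hw⟩ := (Fr.exact_succ 0 (y - (X ℓ : S) • u)).mp
    (by rw [map_sub, map_smul, hu, hv, sub_self])
  refine ⟨w, fun b => ?_⟩
  rw [hw, sub_sub_cancel, Finsupp.smul_apply, smul_eq_mul]
  exact Ideal.mul_mem_right _ _ (X_mem_varIdeal (Finset.mem_singleton_self ℓ))

theorem exactModVars_insert {x : Fin (n + 1)} {U : Finset (Fin (n + 1))} (hx : x ∉ U) {t : ℕ}
    (h1 : Fr.ExactModVars U (t + 1)) (h0 : Fr.ExactModVars U t) :
    Fr.ExactModVars (insert x U) (t + 1) := by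
  intro y hy
  set v := divXVec x (Fr.D (t + 1) y)
  set j := modXVec x (Fr.D (t + 1) y)
  have hj : ∀ b, j b ∈ varIdeal U := fun b => by
    simpa [j] using modMonomial_single_mem_varIdeal (hy b)
  have hyv : (X x : S) • v + j = Fr.D (t + 1) y := X_smul_divXVec_add_modXVec _ _
  have hv : ∀ b, Fr.D t v b ∈ varIdeal U := by
    intro b
    refine mem_varIdeal_of_X_mul_mem hx ?_
    have h := congrArg (· b) (Fr.D_D t y)
    simp only [← hyv, map_add, map_smul, Finsupp.add_apply, Finsupp.smul_apply, smul_eq_mul,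
      Finsupp.coe_zero, Pi.zero_apply] at h
    rw [eq_neg_of_add_eq_zero_left h]
    exact neg_mem ((Fr.D t).finsupp_apply_mem_of_forall_apply_mem hj b)
  obtain ⟨u, hu⟩ := h0 v hv
  obtain ⟨w, hw⟩ := h1 (y - (X x : S) • u) fun b => by
    have h : Fr.D (t + 1) (y - (X x : S) • u) = j + (X x : S) • (v - Fr.D (t + 1) u) := by
      rw [map_sub, map_smul, ← hyv, smul_sub]; abel
    rw [h, Finsupp.add_apply, Finsupp.smul_apply, smul_eq_mul]
    exact add_mem (hj b) (Ideal.mul_mem_left _ _ (hu b))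
  refine ⟨w, fun b => ?_⟩
  have h : (y - Fr.D (t + 2) w) b = (y - (X x : S) • u - Fr.D (t + 2) w) b + X x * u b := by
    simp only [Finsupp.sub_apply, Finsupp.smul_apply, smul_eq_mul]; ring
  rw [h]
  exact add_mem (varIdeal_mono (Finset.subset_insert x U) (hw b))
    (Ideal.mul_mem_right _ _ (X_mem_varIdeal (Finset.mem_insert_self x U)))

theorem exactModVars_of_card_erase_le (ℓ : Fin (n + 1))
    (hreg : ∀ m : M, (X ℓ : S) • m = 0 → m = 0) {U : Finset (Fin (n + 1))} {t : ℕ}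
    (hU : (U.erase ℓ).card ≤ t) : Fr.ExactModVars U t := by
  suffices h : ∀ V : Finset (Fin (n + 1)), ℓ ∉ V → ∀ t, V.card ≤ t →
      Fr.ExactModVars V t ∧ Fr.ExactModVars (insert ℓ V) t by
    by_cases hℓ : ℓ ∈ U
    · rw [← Finset.insert_erase hℓ]
      exact (h _ (Finset.notMem_erase ℓ U) t hU).2
    · rw [Finset.erase_eq_of_notMem hℓ] at hU
      exact (h U hℓ t hU).1
  intro V
  induction V using Finset.induction_on with
  | empty =>
    intro _ t _
    refine ⟨Fr.exactModVars_empty t, ?_⟩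
    cases t with
    | zero => simpa using Fr.exactModVars_singleton_zero ℓ hreg
    | succ t =>
      exact Fr.exactModVars_insert (Finset.notMem_empty ℓ) (Fr.exactModVars_empty _)
        (Fr.exactModVars_empty _)
  | insert x V hxV ih =>
    intro hℓ t ht
    rw [Finset.card_insert_of_notMem hxV] at ht
    obtain ⟨t, rfl⟩ : ∃ t', t = t' + 1 := ⟨t - 1, by omega⟩
    have hℓV : ℓ ∉ V := fun h => hℓ (Finset.mem_insert_of_mem h)
    have hxℓ : x ≠ ℓ := fun h => hℓ (h ▸ Finset.mem_insert_self x V)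
    obtain ⟨h1, h1ℓ⟩ := ih hℓV (t + 1) (by omega)
    obtain ⟨h0, h0ℓ⟩ := ih hℓV t (by omega)
    refine ⟨Fr.exactModVars_insert hxV h1 h0, ?_⟩
    rw [Finset.insert_comm]
    exact Fr.exactModVars_insert (by simp [hxℓ, hxV]) h1ℓ h0ℓ

theorem constantCoeff_apply_eq_zero_of_exactModVars {U : Finset (Fin (n + 1))} {s : ℕ}
    (hE : Fr.ExactModVars U s) {z : Fr.B (s + 1) →₀ S} (hz : ∀ b, Fr.D s z b ∈ varIdeal U)
    (b : Fr.B (s + 1)) : constantCoeff (z b) = 0 := by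
  obtain ⟨w, hw⟩ := hE z hz
  have h := constantCoeff_eq_zero_of_mem_varIdeal (hw b)
  rwa [Finsupp.sub_apply, map_sub, Fr.constantCoeff_D_apply, sub_zero] at h

theorem exists_not_X_dvd_of_vars_subset {s : ℕ} {T U : Finset (Fin (n + 1))} {x : Fin (n + 1)}
    (hx : x ∉ U) {z : Fr.B (s + 1) →₀ S} (hz : z ≠ 0) (hT : ∀ b, (z b).vars ⊆ T)
    (hU : ∀ b, Fr.D s z b ∈ varIdeal U) :
    ∃ z' : Fr.B (s + 1) →₀ S, ((∀ b, (z' b).vars ⊆ T) ∧ ∀ b, Fr.D s z' b ∈ varIdeal U) ∧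
      ∃ b, ¬ X x ∣ z' b :=
  exists_not_X_dvd_apply _ x (fun _ ⟨hT', hU'⟩ =>
    ⟨fun b => (vars_subset_vars_X_mul x _).trans (by simpa using hT' b),
      fun b => mem_varIdeal_of_X_mul_mem hx (by simpa using hU' b)⟩) hz ⟨hT, hU⟩

/-- The variables of `T` other than `t₀` are discarded one at a time into `U`; once only `x_{t₀}`
is left, an entry not divisible by `x_{t₀}` has a nonzero constant term. -/
theorem eq_zero_of_vars_subset {s : ℕ} {T U : Finset (Fin (n + 1))} {t₀ : Fin (n + 1)}
    (hE : Fr.ExactModVars (U ∪ T.erase t₀) s) (hTU : Disjoint T U) (ht₀ : t₀ ∉ U)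
    {z : Fr.B (s + 1) →₀ S} (hT : ∀ b, (z b).vars ⊆ T) (hU : ∀ b, Fr.D s z b ∈ varIdeal U) :
    z = 0 := by
  by_contra hz
  by_cases hpeel : ∃ t ∈ T, t ≠ t₀
  · obtain ⟨t, htT, htt₀⟩ := hpeel
    obtain ⟨z', ⟨hT', hU'⟩, b, hb⟩ :=
      Fr.exists_not_X_dvd_of_vars_subset (Finset.disjoint_left.mp hTU htT) hz hT hU
    have hz' := X_smul_divXVec_add_modXVec t z'
    have hzero : modXVec t z' = 0 := by
      refine eq_zero_of_vars_subset (T := T.erase t) (U := insert t U) (t₀ := t₀) ?_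
        (Finset.disjoint_insert_right.mpr ⟨Finset.notMem_erase t T,
          hTU.mono_left (Finset.erase_subset t T)⟩)
        (by simp [htt₀.symm, ht₀]) (fun b => ?_) (fun b => ?_)
      · convert hE using 1
        ext a
        by_cases hat : a = t <;> simp [hat, htT, htt₀]
      · simpa using (vars_modMonomial_single_subset _ t).trans
          (Finset.erase_subset_erase t (hT' b))
      · rw [← sub_eq_of_eq_add' hz'.symm, map_sub, map_smul, Finsupp.sub_apply,
          Finsupp.smul_apply, smul_eq_mul]
        exact sub_mem (varIdeal_mono (Finset.subset_insert t U) (hU' b))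
          (Ideal.mul_mem_right _ _ (X_mem_varIdeal (Finset.mem_insert_self t U)))
    exact hb (X_dvd_iff_modMonomial_eq_zero.mpr (by simpa using congrArg (· b) hzero))
  · have hT₀ : T ⊆ {t₀} :=
      Finset.subset_singleton_iff'.mpr fun t ht => by_contra fun h => hpeel ⟨t, ht, h⟩
    rw [(Finset.erase_eq_empty_iff T t₀).mpr (Finset.subset_singleton_iff.mp hT₀),
      Finset.union_empty] at hE
    obtain ⟨z', ⟨hT', hU'⟩, b, hb⟩ := Fr.exists_not_X_dvd_of_vars_subset ht₀ hz hT hU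
    exact constantCoeff_ne_zero_of_vars_subset_singleton ((hT' b).trans hT₀) hb
      (Fr.constantCoeff_apply_eq_zero_of_exactModVars hE hU' b)
termination_by T.card
decreasing_by exact Finset.card_erase_lt_of_mem htT

theorem eq_zero_of_aug_eq_zero (ℓ : Fin (n + 1)) (hreg : ∀ m : M, (X ℓ : S) • m = 0 → m = 0)
    {z : Fr.B 0 →₀ S} (hℓ : ∀ b, (z b).vars ⊆ {ℓ}) (haug : Fr.aug z = 0) : z = 0 := by
  by_contra hz
  obtain ⟨z', ⟨hℓ', haug'⟩, b, hb⟩ :=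
    exists_not_X_dvd_apply (fun z => (∀ b, (z b).vars ⊆ {ℓ}) ∧ Fr.aug z = 0) ℓ
      (fun _ ⟨hℓ, haug⟩ => ⟨fun b => (vars_subset_vars_X_mul ℓ _).trans (by simpa using hℓ b),
        hreg _ (by rwa [← map_smul])⟩) hz ⟨hℓ, haug⟩
  obtain ⟨w, rfl⟩ := (Fr.exact_zero z').mp haug'
  exact constantCoeff_ne_zero_of_vars_subset_singleton (hℓ' b) hb (Fr.constantCoeff_D_apply 0 w b)

theorem exists_not_vars_D_single_subset (ℓ : Fin (n + 1))
    (hreg : ∀ m : M, (X ℓ : S) • m = 0 → m = 0) {i : ℕ} (b : Fr.B (i + 1))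
    {T : Finset (Fin (n + 1))} (hT : (T.erase ℓ).card ≤ i) :
    ∃ b', ¬ (Fr.D i (Finsupp.single b 1) b').vars ⊆ T := by
  by_contra! hsub
  apply Fr.D_single_ne_zero i b
  cases i with
  | zero =>
    have hTℓ : T ⊆ {ℓ} := Finset.subset_singleton_iff.mpr
      ((Finset.erase_eq_empty_iff T ℓ).mp (Finset.card_eq_zero.mp (by omega)))
    exact Fr.eq_zero_of_aug_eq_zero ℓ hreg (fun b' => (hsub b').trans hTℓ) (Fr.aug_D _)
  | succ s =>
    obtain ⟨t₀, ht₀⟩ : ∃ t₀, ((T.erase t₀).erase ℓ).card ≤ s := by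
      simp only [Finset.erase_right_comm (s := T)]
      rcases (T.erase ℓ).eq_empty_or_nonempty with h | ⟨t₀, ht₀⟩
      · exact ⟨ℓ, by simp [h]⟩
      · exact ⟨t₀, by rw [Finset.card_erase_of_mem ht₀]; omega⟩
    exact Fr.eq_zero_of_vars_subset (U := ∅) (t₀ := t₀)
      (by simpa using Fr.exactModVars_of_card_erase_le ℓ hreg ht₀) (Finset.disjoint_empty_right T)
      (Finset.notMem_empty t₀) hsub (fun b' => by simp [Fr.D_D])

theorem weightSumErase_le_deg (ℓ : Fin (n + 1)) (hmono : Monotone d)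
    (hneg : ∀ e : ℤ, e < 0 → 𝒜 e = ⊥) (hreg : ∀ m : M, (X ℓ : S) • m = 0 → m = 0) :
    ∀ i (b : Fr.B i), weightSumErase d ℓ i ≤ Fr.deg i b
  | 0, b => by
    rw [weightSumErase_zero]
    exact Fr.deg_zero_nonneg hneg b
  | i + 1, b => by
    by_contra! hb
    obtain ⟨b', hb'⟩ := Fr.exists_not_vars_D_single_subset ℓ hreg b
      (card_erase_filter_lt_weightSumErase_gap_le hmono ℓ i)
    refine hb' fun t ht => ?_
    have hdt := ((mem_weightedHomogeneousSubmodule _ _ _ _).mp (Fr.homog i b b')).le_of_mem_vars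
      (fun _ => Int.natCast_nonneg _) ht
    have hb'deg := weightSumErase_le_deg ℓ hmono hneg hreg i b'
    simp only [Finset.mem_filter, Finset.mem_univ, true_and]
    omega

end GradedFreeRes

theorem stmt_2_general (k : Type) [Field k] (n : ℕ) (d : Fin (n + 1) → ℕ)
    (hmono : Monotone d)
    (M : Type) [AddCommGroup M] [Module (MvPolynomial (Fin (n + 1)) k) M]
    [Module k M]
    (𝒜 : ℤ → Submodule k M)
    (hneg : ∀ e : ℤ, e < 0 → 𝒜 e = ⊥)
    (ℓ : Fin (n + 1))
    (hreg : ∀ m : M, (X ℓ : MvPolynomial (Fin (n + 1)) k) • m = 0 → m = 0)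
    (Fr : GradedFreeRes k n d M 𝒜)
    (i : ℕ) (j : ℤ) (hβ : ∃ b : Fr.B i, Fr.deg i b = j) :
    (if i < (ℓ : ℕ) then
        ∑ t ∈ Finset.univ.filter (fun t : Fin (n + 1) => (t : ℕ) < i), (d t : ℤ)
      else
        (∑ t ∈ Finset.univ.filter (fun t : Fin (n + 1) => (t : ℕ) < i + 1), (d t : ℤ)) - d ℓ)
      ≤ j := by
  obtain ⟨b, rfl⟩ := hβ
  exact Fr.weightSumErase_le_deg ℓ hmono hneg hreg i b

theorem stmt_2 (k : Type) [Field k] (n : ℕ) (d : Fin (n + 1) → ℕ)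
    (hmono : Monotone d) (hpos : ∀ t, 0 < d t)
    (M : Type) [AddCommGroup M] [Module (MvPolynomial (Fin (n + 1)) k) M]
    [Module k M] [IsScalarTower k (MvPolynomial (Fin (n + 1)) k) M]
    (𝒜 : ℤ → Submodule k M)
    (hdec : DirectSum.IsInternal 𝒜)
    (hgr : ∀ (t : Fin (n + 1)) (e : ℤ), ∀ m ∈ 𝒜 e,
      (X t : MvPolynomial (Fin (n + 1)) k) • m ∈ 𝒜 (e + d t))
    (hfg : Module.Finite (MvPolynomial (Fin (n + 1)) k) M)
    (hneg : ∀ e : ℤ, e < 0 → 𝒜 e = ⊥) (h0 : 𝒜 0 ≠ ⊥)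
    (ℓ : Fin (n + 1))
    (hreg : ∀ m : M, (X ℓ : MvPolynomial (Fin (n + 1)) k) • m = 0 → m = 0)
    (Fr : GradedFreeRes k n d M 𝒜)
    (i : ℕ) (j : ℤ) (hβ : ∃ b : Fr.B i, Fr.deg i b = j) :
    (if i < (ℓ : ℕ) then
        ∑ t ∈ Finset.univ.filter (fun t : Fin (n + 1) => (t : ℕ) < i), (d t : ℤ)
      else
        (∑ t ∈ Finset.univ.filter (fun t : Fin (n + 1) => (t : ℕ) < i + 1), (d t : ℤ)) - d ℓ)
      ≤ j :=
  stmt_2_general k n d hmono M 𝒜 hneg ℓ hreg Fr i j hβ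
end
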